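/- arXiv:2209.01926 — 4 statements merged into one kernel-verified Lean document; each statement's English description precedes it below -/
import Mathlib

section
/- Let X and Y be Polish spaces, f : X → Y a Borel measurable map, and μ a Borel probability measure on X. Then for every subset E ⊆ Y (not necessarily Borel), the outer measure of E under the image measure μ ∘ f⁻¹ equals the outer measure of f⁻¹(E) under μ: (μ ∘ f⁻¹)*(E) = μ*(f⁻¹(E)). -/
/-!
Refining the topology of `X` to a finer Polish topology changes neither the Borel sets nor `μ`,
and can be chosen to make `f` continuous. For continuous `f`, let `A ⊇ f ⁻¹' E` be a measurable
hull. By inner regularity, `Aᶜ` contains a compact `K` of almost full measure; `f '' K` is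
compact, hence closed, and disjoint from `E`, so its complement is a Borel set containing `E` whose
preimage is covered by `A` up to the small set `Aᶜ \ K`.
-/

open MeasureTheory Set

theorem MeasureTheory.Measure.map_apply_eq_of_continuous
    {X Y : Type*} [TopologicalSpace X] [T2Space X] [MeasurableSpace X] [OpensMeasurableSpace X]
    [TopologicalSpace Y] [T2Space Y] [MeasurableSpace Y] [BorelSpace Y]
    {f : X → Y} (hf : Continuous f) (μ : Measure X) [IsFiniteMeasure μ]
    [μ.InnerRegularCompactLTTop] (E : Set Y) :
    μ.map f E = μ (f ⁻¹' E) := by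
  refine le_antisymm ?_ (le_map_apply hf.aemeasurable E)
  set A := toMeasurable μ (f ⁻¹' E)
  refine ENNReal.le_of_forall_pos_le_add fun ε hε _ => ?_
  obtain ⟨K, hKA, hK, hKε⟩ := (measurableSet_toMeasurable μ (f ⁻¹' E)).compl
    |>.exists_isCompact_sdiff_lt (measure_ne_top μ _) (ENNReal.coe_ne_zero.2 hε.ne')
  have hEK : E ⊆ (f '' K)ᶜ := by
    rintro y hy ⟨x, hxK, rfl⟩
    exact hKA hxK (subset_toMeasurable μ _ hy)
  have hKc : f ⁻¹' (f '' K)ᶜ ⊆ A ∪ (Aᶜ \ K) := fun x hx =>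
    (em (x ∈ A)).imp id fun hxA => ⟨hxA, fun hxK => hx (mem_image_of_mem f hxK)⟩
  calc μ.map f E ≤ μ.map f (f '' K)ᶜ := measure_mono hEK
    _ = μ (f ⁻¹' (f '' K)ᶜ) :=
      map_apply hf.measurable (hK.image hf).isClosed.measurableSet.compl
    _ ≤ μ A + μ (Aᶜ \ K) := (measure_mono hKc).trans (measure_union_le _ _)
    _ ≤ μ (f ⁻¹' E) + ε := by rw [measure_toMeasurable]; gcongr

theorem Measurable.exists_polishSpace_borelSpace_continuous
    {X Y : Type*} [TopologicalSpace X] [hX : PolishSpace X] [MeasurableSpace X] [hB : BorelSpace X]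
    [TopologicalSpace Y] [MeasurableSpace Y] [OpensMeasurableSpace Y]
    {f : X → Y} [SecondCountableTopology (range f)] (hf : Measurable f) :
    ∃ t' : TopologicalSpace X,
      @PolishSpace X t' ∧ @BorelSpace X t' _ ∧ @Continuous X Y t' _ f := by
  obtain ⟨t', ht't, hfc, ht'⟩ := hf.exists_continuous
  refine ⟨t', ht', ⟨?_⟩, hfc⟩
  exact hB.measurable_eq.trans (borel_eq_borel_of_le ht' hX ht't).symm

/-- For Polish spaces `X`, `Y`, a Borel map `f : X → Y` and a Borel probability
measure `μ` on `X`, the outer measure of any `E ⊆ Y` under the image measure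
`μ ∘ f⁻¹` equals the `μ`-outer measure of `f ⁻¹' E`. -/
theorem outer_measure_map_eq_of_polish
    {X Y : Type*} [TopologicalSpace X] [PolishSpace X] [TopologicalSpace Y] [PolishSpace Y]
    [MeasurableSpace X] [BorelSpace X] [MeasurableSpace Y] [BorelSpace Y]
    {f : X → Y} (hf : Measurable f)
    (μ : Measure X) [IsProbabilityMeasure μ]
    (E : Set Y) :
    Measure.map f μ E = μ (f ⁻¹' E) := by
  obtain ⟨t', _, _, hfc⟩ := hf.exists_polishSpace_borelSpace_continuous
  exact Measure.map_apply_eq_of_continuous hfc μ E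
end

section
/- Every Borel probability measure on a Hausdorff Souslin space is a Radon measure; in particular, it is inner regular with respect to compact sets: for every Borel set A, μ(A) = sup{μ(K) : K compact, K ⊆ A}. -/
open MeasureTheory

open scoped ENNReal

section Aux

open Set

/-- In the Baire space `ℕ → ℕ`, every open neighbourhood of a point contains a
cylinder determined by finitely many coordinates. -/
private lemma cyl_subset_of_isOpen {O : Set (ℕ → ℕ)} (hO : IsOpen O) {τ : ℕ → ℕ} (hτ : τ ∈ O) :
    ∃ m : ℕ, {σ : ℕ → ℕ | ∀ i < m, σ i = τ i} ⊆ O := by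
  obtain ⟨I, u, hu, hIu⟩ := isOpen_pi_iff.1 hO τ hτ
  refine ⟨(I.sup id) + 1, fun σ hσ => hIu fun a ha => ?_⟩
  have : σ a = τ a := hσ a (Nat.lt_succ_of_le (Finset.le_sup (f := id) ha))
  rw [this]; exact (hu a ha).2

/-- Key compactness lemma: a point of a Hausdorff space lying in the closures of the images
of all the truncated cylinders lies in the image of the full compact cylinder. -/
private lemma mem_image_of_mem_closures {X : Type*} [TopologicalSpace X] [T2Space X]
    {f : (ℕ → ℕ) → X} (hf : Continuous f) (N : ℕ → ℕ) {x : X}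
    (hx : ∀ j, x ∈ closure (f '' {σ : ℕ → ℕ | ∀ i < j, σ i ≤ N i})) :
    x ∈ f '' {σ : ℕ → ℕ | ∀ i, σ i ≤ N i} := by
  set K : Set (ℕ → ℕ) := {σ : ℕ → ℕ | ∀ i, σ i ≤ N i} with hK
  have hKc : IsCompact K := by
    have : K = Set.pi univ (fun i => Set.Iic (N i)) := by
      ext σ; simp [hK, Set.mem_pi, Pi.le_def]
    rw [this]
    exact isCompact_univ_pi fun i => (Set.finite_Iic (N i)).isCompact
  by_contra hxK
  -- for each τ ∈ K, get a cylinder around τ and an open nbhd of x avoided by f on the cylinder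
  have sep : ∀ τ ∈ K, ∃ (m : ℕ) (V : Set X), IsOpen V ∧ x ∈ V ∧
      ∀ σ : ℕ → ℕ, (∀ i < m, σ i = τ i) → f σ ∉ V := by
    intro τ hτ
    have hne : f τ ≠ x := fun h => hxK ⟨τ, hτ, h⟩
    obtain ⟨U, V, hU, hV, hfU, hxV, hUV⟩ := t2_separation hne
    obtain ⟨m, hm⟩ := cyl_subset_of_isOpen (hf.isOpen_preimage U hU) (show τ ∈ f ⁻¹' U from hfU)
    exact ⟨m, V, hV, hxV, fun σ hσ hfV => (Set.disjoint_left.1 hUV (hm hσ) hfV)⟩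
  choose! m V hVopen hxV hVavoid using sep
  -- cover K by the cylinders
  have hcover : K ⊆ ⋃ τ ∈ K, {σ : ℕ → ℕ | ∀ i < m τ, σ i = τ i} := by
    intro τ hτ
    exact Set.mem_biUnion hτ (fun i _ => rfl)
  have hopen : ∀ τ ∈ K, IsOpen {σ : ℕ → ℕ | ∀ i < m τ, σ i = τ i} := by
    intro τ _
    have : {σ : ℕ → ℕ | ∀ i < m τ, σ i = τ i}
        = Set.pi (↑(Finset.range (m τ)) : Set ℕ) (fun i => {τ i}) := by
      ext σ; simp [Set.mem_pi]
    rw [this]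
    exact isOpen_set_pi (Finset.range (m τ)).finite_toSet (fun i _ => isOpen_discrete _)
  obtain ⟨t, htK, htfin, htcover⟩ := hKc.elim_finite_subcover_image hopen hcover
  -- bound on the m's
  obtain ⟨M, hM⟩ : ∃ M : ℕ, ∀ τ ∈ t, m τ ≤ M := by
    rcases (htfin.image m).bddAbove with ⟨M, hMub⟩
    exact ⟨M, fun τ hτ => hMub (Set.mem_image_of_mem m hτ)⟩
  -- intersect the V's
  have hVo : IsOpen (⋂ τ ∈ t, V τ) := htfin.isOpen_biInter (fun τ hτ => hVopen τ (htK hτ))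
  have hxVi : x ∈ ⋂ τ ∈ t, V τ := Set.mem_biInter fun τ hτ => hxV τ (htK hτ)
  -- x is in the closure of f '' E_M, so the image meets the nbhd
  have := hx M
  rw [mem_closure_iff] at this
  obtain ⟨y, hyV, σ, hσE, hyσ⟩ := this _ hVo hxVi
  -- build a point of K agreeing with σ below M
  set τ₀ : ℕ → ℕ := fun i => if i < M then σ i else 0 with hτ₀
  have hτ₀K : τ₀ ∈ K := by
    intro i
    by_cases h : i < M
    · simpa [hτ₀, h] using hσE i h
    · simp [hτ₀, h]
  obtain ⟨τ, hτt, hττ₀⟩ : ∃ τ ∈ t, ∀ i < m τ, τ₀ i = τ i := by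
    have := htcover hτ₀K
    simpa using this
  have hσagree : ∀ i < m τ, σ i = τ i := by
    intro i hi
    have hiM : i < M := lt_of_lt_of_le hi (hM τ hτt)
    have := hττ₀ i hi
    simpa [hτ₀, hiM] using this
  have : f σ ∉ V τ := hVavoid τ (htK hτt) σ hσagree
  exact this (by rw [← hyσ] at hyV; exact Set.mem_iInter₂.mp hyV τ hτt)

/-- Tightness for continuous images of the Baire space: the range of a continuous map
from `ℕ → ℕ` into a Hausdorff space is inner regular for any finite Borel measure. -/
private lemma range_tight {X : Type*} [TopologicalSpace X] [T2Space X] [MeasurableSpace X]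
    [OpensMeasurableSpace X] (μ : Measure X) [IsFiniteMeasure μ]
    {f : (ℕ → ℕ) → X} (hf : Continuous f) {r : ℝ≥0∞} (hr : r < μ (Set.range f)) :
    ∃ K : Set X, K ⊆ Set.range f ∧ IsCompact K ∧ r < μ K := by
  obtain ⟨r', hrr', hr'⟩ := exists_between hr
  set Ej : (ℕ → ℕ) → ℕ → Set (ℕ → ℕ) := fun N j => {σ : ℕ → ℕ | ∀ i < j, σ i ≤ N i} with hEj
  -- one-step choice
  have key : ∀ (N : ℕ → ℕ) (j : ℕ), r' < μ (f '' Ej N j) →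
      ∃ n : ℕ, r' < μ (f '' Ej (Function.update N j n) (j + 1)) := by
    intro N j h
    have hmono : Monotone fun n => f '' Ej (Function.update N j n) (j + 1) := by
      intro a b hab
      apply Set.image_mono
      intro σ hσ i hi
      rcases Nat.lt_succ_iff_lt_or_eq.1 hi with hi' | hieq
      · have := hσ i hi
        rw [Function.update_of_ne (Nat.ne_of_lt hi')] at this
        rwa [Function.update_of_ne (Nat.ne_of_lt hi')]
      · subst hieq
        have := hσ i (Nat.lt_succ_self i)
        rw [Function.update_self] at this ⊢
        exact this.trans hab
    have hU : (⋃ n, f '' Ej (Function.update N j n) (j + 1)) = f '' Ej N j := by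
      apply Set.Subset.antisymm
      · refine Set.iUnion_subset fun n => Set.image_mono fun σ hσ i hi => ?_
        have := hσ i (hi.trans (Nat.lt_succ_self j))
        rwa [Function.update_of_ne (Nat.ne_of_lt hi)] at this
      · rintro x ⟨σ, hσ, rfl⟩
        refine Set.mem_iUnion.2 ⟨σ j, Set.mem_image_of_mem f fun i hi => ?_⟩
        rcases Nat.lt_succ_iff_lt_or_eq.1 hi with hi' | hieq
        · rw [Function.update_of_ne (Nat.ne_of_lt hi')]; exact hσ i hi'
        · subst hieq; rw [Function.update_self]
    rw [← hU, Monotone.measure_iUnion hmono] at h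
    exact lt_iSup_iff.mp h
  choose! pick hpick using key
  -- build the sequence of bounds by recursion
  set aux : ℕ → (ℕ → ℕ) := fun j =>
    Nat.rec (motive := fun _ => ℕ → ℕ) (fun _ => 0)
      (fun j Nj => Function.update Nj j (pick Nj j)) j with haux
  set N : ℕ → ℕ := fun i => aux (i + 1) i with hN
  have hagree : ∀ j, ∀ i < j, aux j i = N i := by
    intro j
    induction j with
    | zero => intro i hi; exact absurd hi (Nat.not_lt_zero i)
    | succ j ih =>
      intro i hi
      rcases Nat.lt_succ_iff_lt_or_eq.1 hi with hi' | hieq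
      · have : aux (j + 1) i = aux j i := Function.update_of_ne (Nat.ne_of_lt hi') _ _
        rw [this]; exact ih i hi'
      · subst hieq; rfl
  have hEeq : ∀ j, Ej (aux j) j = Ej N j := by
    intro j
    ext σ
    constructor <;> intro hσ i hi
    · rw [← hagree j i hi]; exact hσ i hi
    · rw [hagree j i hi]; exact hσ i hi
  have hstep : ∀ j, r' < μ (f '' Ej N j) := by
    intro j
    induction j with
    | zero =>
      have : Ej N 0 = Set.univ := by ext σ; simp [hEj]
      rw [this, Set.image_univ]; exact hr'
    | succ j ih =>
      have h1 : r' < μ (f '' Ej (aux j) j) := by rw [hEeq]; exact ih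
      have h2 := hpick (aux j) j h1
      have : Function.update (aux j) j (pick (aux j) j) = aux (j + 1) := rfl
      rw [this, hEeq] at h2
      exact h2
  -- the compact set
  refine ⟨f '' {σ : ℕ → ℕ | ∀ i, σ i ≤ N i}, ?_, ?_, ?_⟩
  · exact Set.image_subset_range f _
  · have : IsCompact {σ : ℕ → ℕ | ∀ i, σ i ≤ N i} := by
      have : {σ : ℕ → ℕ | ∀ i, σ i ≤ N i} = Set.pi Set.univ fun i => Set.Iic (N i) := by
        ext σ; simp [Set.mem_pi, Pi.le_def]
      rw [this]
      exact isCompact_univ_pi fun i => (Set.finite_Iic (N i)).isCompact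
    exact this.image hf
  · -- measure bound via closures of the images of the truncated cylinders
    have hsub : (⋂ j, closure (f '' Ej N j)) ⊆ f '' {σ : ℕ → ℕ | ∀ i, σ i ≤ N i} := by
      intro x hx
      exact mem_image_of_mem_closures hf N fun j => Set.mem_iInter.1 hx j
    have hmeas : ∀ j : ℕ, NullMeasurableSet (closure (f '' Ej N j)) μ :=
      fun j => (isClosed_closure.measurableSet).nullMeasurableSet
    have hanti : Directed (· ⊇ ·) fun j => closure (f '' Ej N j) := by
      refine (directed_of_isDirected_le ?_)
      intro a b hab
      exact closure_mono (Set.image_mono fun σ hσ i hi => hσ i (lt_of_lt_of_le hi hab))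
    have hfin : ∃ j : ℕ, μ (closure (f '' Ej N j)) ≠ ⊤ := ⟨0, measure_ne_top μ _⟩
    have hinter : μ (⋂ j, closure (f '' Ej N j)) = ⨅ j, μ (closure (f '' Ej N j)) :=
      Directed.measure_iInter hmeas hanti hfin
    have : r' ≤ μ (⋂ j, closure (f '' Ej N j)) := by
      rw [hinter]
      exact le_iInf fun j => (hstep j).le.trans (measure_mono subset_closure)
    exact lt_of_lt_of_le hrr' (this.trans (measure_mono hsub))

/-- Tightness for analytic sets in a Hausdorff space. -/
private lemma analyticSet_tight {X : Type*} [TopologicalSpace X] [T2Space X] [MeasurableSpace X]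
    [OpensMeasurableSpace X] (μ : Measure X) [IsFiniteMeasure μ]
    {A : Set X} (hA : MeasureTheory.AnalyticSet A) {r : ℝ≥0∞} (hr : r < μ A) :
    ∃ K : Set X, K ⊆ A ∧ IsCompact K ∧ r < μ K := by
  rw [MeasureTheory.AnalyticSet] at hA
  rcases hA with rfl | ⟨f, hf, rfl⟩
  · simp at hr
  · exact range_tight μ hf hr

end Aux

/-- A Souslin space: a topological space that is the image of a Polish space
under a continuous surjection. -/
def IsSouslin (X : Type*) [TopologicalSpace X] : Prop :=
  ∃ (Z : Type) (tZ : TopologicalSpace Z), @PolishSpace Z tZ ∧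
    ∃ g : Z → X, @Continuous Z X tZ _ g ∧ Function.Surjective g

/-- Every Borel probability measure on a Hausdorff Souslin space is Radon; in
particular it is inner regular with respect to compact sets: for every Borel
set `A`, `μ A = sup {μ K : K compact, K ⊆ A}`. -/
theorem probabilityMeasure_radon_of_souslin
    {X : Type*} [TopologicalSpace X] [T2Space X] [MeasurableSpace X] [BorelSpace X]
    (hX : IsSouslin X) (μ : Measure X) [IsProbabilityMeasure μ] :
    μ.InnerRegular ∧
      ∀ A : Set X, MeasurableSet A →
        μ A = ⨆ (K : Set X) (_ : IsCompact K) (_ : K ⊆ A), μ K := by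
  obtain ⟨Z, tZ, hpolish, g, hgc, hgs⟩ := hX
  -- every measurable set of X is analytic
  have hanalytic : ∀ A : Set X, MeasurableSet A → MeasureTheory.AnalyticSet A := by
    intro A hA
    letI : MeasurableSpace Z := borel Z
    haveI : BorelSpace Z := ⟨rfl⟩
    have hpre : MeasurableSet (g ⁻¹' A) := hgc.measurable hA
    have h1 : MeasureTheory.AnalyticSet (g ⁻¹' A) := hpre.analyticSet
    have h2 : MeasureTheory.AnalyticSet (g '' (g ⁻¹' A)) := h1.image_of_continuous hgc
    rwa [Set.image_preimage_eq A hgs] at h2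
  have hwrt : μ.InnerRegularWRT IsCompact MeasurableSet := by
    intro A hA r hr
    obtain ⟨K, hKA, hKc, hrK⟩ := analyticSet_tight μ (hanalytic A hA) hr
    exact ⟨K, hKA, hKc, hrK⟩
  refine ⟨⟨hwrt⟩, fun A hA => ?_⟩
  refine le_antisymm (le_of_forall_lt fun r hr => ?_) ?_
  · obtain ⟨K, hKA, hKc, hrK⟩ := hwrt hA r hr
    exact lt_of_lt_of_le hrK (le_iSup_of_le K (le_iSup_of_le hKc (le_iSup_of_le hKA le_rfl)))
  · exact iSup_le fun K => iSup_le fun _ => iSup_le fun hKA => measure_mono hKA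
end

section
/- Let X and Y be Polish spaces, each equipped with its Borel σ-algebra, and let f : X → Y be a Borel measurable map. Then the induced pushforward map between the spaces of Borel probability measures, ProbabilityMeasure X → ProbabilityMeasure Y, μ ↦ μ ∘ f⁻¹, is Borel measurable, where each space of probability measures carries the Borel σ-algebra of its topology of weak convergence. -/
/-!
For a separable metrizable space the Borel σ-algebra of the weak topology on probability measures
is the Giry σ-algebra, generated by the evaluations `ν ↦ ν A`; for the latter the pushforward is
measurable because `ν ↦ ν (f ⁻¹' A)` is.

Giry ⊆ Borel: by the portmanteau theorem `ν ↦ ν F` is upper semicontinuous for closed `F`, and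
closed sets form a π-system generating the Borel sets.

Borel ⊆ Giry: on a countable discrete space `ν` is a continuous function of its weights
`(ν {i})ᵢ`, since `q ↦ ∑_{i ∈ G} qᵢ` is lower semicontinuous. In general, `ν` is the weak limit of
its images under measurable maps that factor through `ℕ` and move every point by less than
`1 / (k + 1)`, and each of these image maps is Borel measurable by the countable case.
-/

open MeasureTheory Topology Filter Set TopologicalSpace
open scoped ENNReal

theorem exists_measurable_index_dist_lt {Y : Type*} [PseudoMetricSpace Y] [SeparableSpace Y]
    [Nonempty Y] [MeasurableSpace Y] [OpensMeasurableSpace Y] {ε : ℝ} (hε : 0 < ε) :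
    ∃ (x : ℕ → Y) (n : Y → ℕ), Measurable n ∧ ∀ y, dist (x (n y)) y < ε := by
  classical
  obtain ⟨x, hx⟩ := TopologicalSpace.exists_dense_seq Y
  have hnear (y : Y) : ∃ i, dist (x i) y < ε := by
    simpa only [dist_comm] using hx.exists_dist_lt y hε
  exact ⟨x, fun y ↦ Nat.find (hnear y),
    measurable_find hnear fun i ↦ measurableSet_lt (by fun_prop) measurable_const,
    fun y ↦ Nat.find_spec (hnear y)⟩

namespace MeasureTheory.ProbabilityMeasure

def probabilityVectors (α : Type*) : Set (α → ℝ≥0∞) := {q | ∑' i, q i = 1}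

section Countable

variable {α : Type*} [MeasurableSpace α]

noncomputable def ofWeights (q : probabilityVectors α) : ProbabilityMeasure α :=
  ⟨Measure.sum fun i ↦ q.1 i • Measure.dirac i, ⟨by simpa using q.2.out⟩⟩

variable [Countable α] [MeasurableSingletonClass α]

theorem ofWeights_apply (q : probabilityVectors α) (s : Set α) :
    (ofWeights q : Measure α) s = ∑' i, s.indicator q.1 i := by
  rw [ofWeights, coe_mk, Measure.sum_apply _ s.to_countable.measurableSet]
  refine tsum_congr fun i ↦ ?_
  by_cases hi : i ∈ s <;> simp [hi]

def weights (ν : ProbabilityMeasure α) : probabilityVectors α :=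
  ⟨fun i ↦ (ν : Measure α) {i},
    by simpa [probabilityVectors] using
      (ν : Measure α).tsum_indicator_apply_singleton univ MeasurableSet.univ⟩

theorem ofWeights_weights (ν : ProbabilityMeasure α) : ofWeights (weights ν) = ν :=
  Subtype.ext (Measure.sum_smul_dirac _)

theorem measurable_weights : Measurable (weights (α := α)) :=
  (measurable_pi_lambda _ fun i ↦
    (Measure.measurable_coe (measurableSet_singleton i)).comp measurable_subtype_coe).subtype_mk

variable [TopologicalSpace α] [DiscreteTopology α]

theorem continuous_ofWeights : Continuous (ofWeights (α := α)) := by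
  refine continuous_iff_continuousAt.2 fun q ↦ tendsto_of_forall_isOpen_le_liminf' fun G _ ↦ ?_
  have : LowerSemicontinuous fun q : probabilityVectors α ↦ ∑' i, G.indicator q.1 i := by
    refine lowerSemicontinuous_tsum fun i ↦ Continuous.lowerSemicontinuous ?_
    by_cases hi : i ∈ G
    · simp only [Set.indicator_of_mem hi]
      exact (continuous_apply i).comp continuous_subtype_val
    · simp only [Set.indicator_of_notMem hi, continuous_const]
  simpa only [ofWeights_apply] using this.le_liminf q

theorem borel_le_measurableSpace_of_countable :
    borel (ProbabilityMeasure α) ≤ instMeasurableSpace := by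
  have hcont : Measurable[_, borel _] (ofWeights (α := α)) :=
    continuous_ofWeights.borel_measurable.mono BorelSpace.measurable_eq.ge le_rfl
  have := hcont.comp measurable_weights
  simp only [Function.comp_def, ofWeights_weights] at this
  exact this.le_map

end Countable

variable {Ω : Type*} [TopologicalSpace Ω] [MeasurableSpace Ω] [BorelSpace Ω]

theorem measurableSpace_le_borel [HasOuterApproxClosed Ω] :
    instMeasurableSpace ≤ borel (ProbabilityMeasure Ω) := by
  let _ : MeasurableSpace (ProbabilityMeasure Ω) := borel _
  have : BorelSpace (ProbabilityMeasure Ω) := ⟨rfl⟩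
  suffices Measurable (toMeasure : ProbabilityMeasure Ω → Measure Ω) from
    MeasurableSpace.comap_le_iff_le_map.2 this
  refine .measure_of_isPiSystem_of_isProbabilityMeasure
    (BorelSpace.measurable_eq.trans borel_eq_generateFrom_isClosed) isPiSystem_isClosed
    fun F hF ↦ ?_
  exact UpperSemicontinuous.measurable <| upperSemicontinuous_iff_limsup_le.2 fun ν ↦
    limsup_measure_closed_le_of_tendsto tendsto_id hF

variable [PseudoMetrizableSpace Ω] [SeparableSpace Ω]

theorem borel_le_measurableSpace : borel (ProbabilityMeasure Ω) ≤ instMeasurableSpace := by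
  let := pseudoMetrizableSpacePseudoMetric Ω
  rcases isEmpty_or_nonempty Ω with hΩ | hΩ
  · have : IsEmpty (ProbabilityMeasure Ω) :=
      ⟨fun ν ↦ (nonempty_of_isProbabilityMeasure (ν : Measure Ω)).elim hΩ.false⟩
    exact fun s _ ↦ Subsingleton.measurableSet
  choose x n hn hx using fun k : ℕ ↦
    exists_measurable_index_dist_lt (Y := Ω) (Nat.one_div_pos_of_nat (n := k) (α := ℝ))
  let G (k : ℕ) (ν : ProbabilityMeasure Ω) : ProbabilityMeasure Ω :=
    (ν.map (hn k).aemeasurable).map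
      (continuous_of_discreteTopology (f := x k)).measurable.aemeasurable
  have hG (k : ℕ) : Measurable[instMeasurableSpace, borel _] (G k) := by
    refine (continuous_map (continuous_of_discreteTopology (f := x k))).borel_measurable.comp
      ((measurable_id'' borel_le_measurableSpace_of_countable).comp ?_)
    exact ((Measure.measurable_map _ (hn k)).comp measurable_subtype_coe).subtype_mk
  have hG_lim (ν : ProbabilityMeasure Ω) : Tendsto (fun k ↦ G k ν) atTop (𝓝 ν) := by
    have hx_lim (y : Ω) : Tendsto (fun k ↦ x k (n k y)) atTop (𝓝 y) :=
      tendsto_iff_dist_tendsto_zero.2 <| squeeze_zero (fun _ ↦ dist_nonneg) (fun k ↦ (hx k y).le)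
        tendsto_one_div_add_atTop_nhds_zero_nat
    have hx_meas (k : ℕ) : Measurable (x k ∘ n k) := measurable_from_nat.comp (hn k)
    have hG_eq (k : ℕ) : G k ν = ⟨(ν : Measure Ω).map (x k ∘ n k),
        Measure.isProbabilityMeasure_map (hx_meas k).aemeasurable⟩ :=
      Subtype.ext (Measure.map_map measurable_from_nat (hn k))
    have := (tendstoInDistribution_of_ae_tendsto (μ' := (ν : Measure Ω)) (Z := id)
      (fun k ↦ (hx_meas k).aemeasurable) aemeasurable_id (ae_of_all _ hx_lim)).tendsto
    simp only [Measure.map_id] at this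
    simp only [hG_eq]
    exact this
  exact (@measurable_of_tendsto_metrizable _ _ _ _ _ (borel _)
    (@BorelSpace.mk _ _ (borel _) rfl) G id hG (tendsto_pi_nhds.2 hG_lim)).le_map

instance borelSpace : BorelSpace (ProbabilityMeasure Ω) :=
  ⟨le_antisymm measurableSpace_le_borel borel_le_measurableSpace⟩

end MeasureTheory.ProbabilityMeasure

/-- For Polish spaces `X`, `Y` and a Borel measurable `f : X → Y`, the induced
pushforward map `ProbabilityMeasure X → ProbabilityMeasure Y`, `μ ↦ μ ∘ f⁻¹`,
is Borel measurable for the Borel σ-algebras of the topologies of weak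
convergence. -/
theorem pushforward_probabilityMeasure_measurable
    {X Y : Type*} [TopologicalSpace X] [PolishSpace X] [MeasurableSpace X] [BorelSpace X]
    [TopologicalSpace Y] [PolishSpace Y] [MeasurableSpace Y] [BorelSpace Y]
    {f : X → Y} (hf : Measurable f) :
    @Measurable (ProbabilityMeasure X) (ProbabilityMeasure Y) (borel _) (borel _)
      (fun μ : ProbabilityMeasure X =>
        (⟨μ.toMeasure.map f,
          Measure.isProbabilityMeasure_map hf.aemeasurable⟩ : ProbabilityMeasure Y)) := by
  rw [← BorelSpace.measurable_eq (α := ProbabilityMeasure X),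
    ← BorelSpace.measurable_eq (α := ProbabilityMeasure Y)]
  exact ((Measure.measurable_map f hf).comp measurable_subtype_coe).subtype_mk
end

section
/- Let S be a nonempty finite type with the discrete topology, T a Polish space with its Borel σ-algebra, and (μ¹, ..., μⁿ) a finite sequence of Borel probability measures on S × T. Let E, F ⊆ S × T be nonempty Borel sets with E ⊆ F and with equal projections onto S: {s : ∃ t, (s,t) ∈ E} = {s : ∃ t, (s,t) ∈ F}. If E is cautiously believed under (μ¹, ..., μⁿ) at level m ≤ n, then F is also cautiously believed under (μ¹, ..., μⁿ) at level m. -/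
open MeasureTheory

/-- Monotonicity of cautious belief for events with the same behavioral
implications: if `E ⊆ F` are nonempty Borel sets with the same projection onto
`S`, and `E` is cautiously believed under the LPS `(μ 0, ..., μ (n-1))` at
level `m ≤ n`, then so is `F`. -/
theorem cautious_belief_monotone_of_eq_proj
    {S : Type*} [Fintype S] [Nonempty S] [TopologicalSpace S] [DiscreteTopology S]
    [MeasurableSpace S] [BorelSpace S]
    {T : Type*} [TopologicalSpace T] [PolishSpace T] [MeasurableSpace T] [BorelSpace T]
    {n : ℕ} (μ : Fin n → Measure (S × T)) (hμ : ∀ l, IsProbabilityMeasure (μ l))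
    {m : ℕ} (hm : m ≤ n)
    {E F : Set (S × T)} (hE : E.Nonempty) (hF : F.Nonempty)
    (hEmeas : MeasurableSet E) (hFmeas : MeasurableSet F)
    (hEF : E ⊆ F)
    (hproj : {s : S | ∃ t : T, (s, t) ∈ E} = {s : S | ∃ t : T, (s, t) ∈ F})
    (h1 : ∀ l : Fin n, (l : ℕ) < m → μ l E = 1)
    (h2 : ∀ s : S, (E ∩ ({s} ×ˢ (Set.univ : Set T))).Nonempty →
      ∃ l : Fin n, (l : ℕ) < m ∧ 0 < μ l (E ∩ ({s} ×ˢ (Set.univ : Set T)))) :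
    (∀ l : Fin n, (l : ℕ) < m → μ l F = 1) ∧
      (∀ s : S, (F ∩ ({s} ×ˢ (Set.univ : Set T))).Nonempty →
        ∃ l : Fin n, (l : ℕ) < m ∧ 0 < μ l (F ∩ ({s} ×ˢ (Set.univ : Set T)))) := by
  constructor
  · intro l hl
    have := hμ l
    have h := measure_mono (μ := μ l) hEF
    rw [h1 l hl] at h
    exact le_antisymm prob_le_one h
  · intro s hs
    obtain ⟨⟨s', t⟩, hmem, hs', -⟩ := hs
    subst hs'
    have hsE : ∃ t : T, (s', t) ∈ E := by
      have : s' ∈ {s : S | ∃ t : T, (s, t) ∈ F} := ⟨t, hmem⟩; rwa [← hproj] at this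
    obtain ⟨t', ht'⟩ := hsE
    obtain ⟨l, hl, hpos⟩ := h2 s' ⟨(s', t'), ht', rfl, trivial⟩
    exact ⟨l, hl, hpos.trans_le (measure_mono (Set.inter_subset_inter_left _ hEF))⟩
end
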